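/- Let L be any modal logic with Cl ⊆ L ⊆ GL.3, closed under substitution. With β'_k built from the single variable p (δ'₀ = □⊥, δ'_{n+1} = ◇δ'_n, α'_n = δ'_n ∧ ¬δ'_{n+1}, β'_n = ◇(p ∧ α'_n)), let s' substitute β'_k for p_k. Then for every modality-free classical formula φ: φ is a classical tautology iff s'(φ) ∈ L. Hence classical satisfiability reduces to L-satisfiability of one-variable modal formulas. -/

import Mathlib

inductive MF : Type
  | var : ℕ → MF
  | bot : MF
  | imp : MF → MF → MF
  | box : MF → MF

def MF.neg (a : MF) : MF := a.imp .bot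
def MF.top : MF := MF.neg .bot
def MF.and (a b : MF) : MF := (a.imp b.neg).neg
def MF.or (a b : MF) : MF := a.neg.imp b
def MF.iff (a b : MF) : MF := (a.imp b).and (b.imp a)
def MF.dia (a : MF) : MF := (MF.box a.neg).neg
def MF.boxPlus (a : MF) : MF := a.and a.box

/-- Standard Kripke semantics. -/
def sat {W : Type} (R : W → W → Prop) (V : ℕ → W → Prop) : W → MF → Prop
  | w, .var n => V n w
  | _, .bot => False
  | w, .imp a b => sat R V w a → sat R V w b
  | w, .box a => ∀ u, R w u → sat R V u a

/-- Modality-free (purely classical) formulas. -/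
def MF.boxFree : MF → Prop
  | .var _ => True
  | .bot => True
  | .imp a b => a.boxFree ∧ b.boxFree
  | .box _ => False

/-- Variable-free formulas. -/
def MF.varFree : MF → Prop
  | .var _ => False
  | .bot => True
  | .imp a b => a.varFree ∧ b.varFree
  | .box a => a.varFree

/-- Classical Boolean evaluation (the `box` case is irrelevant: used on box-free formulas). -/
def evalb (v : ℕ → Bool) : MF → Bool
  | .var n => v n
  | .bot => false
  | .imp a b => !(evalb v a) || evalb v b
  | .box _ => false

/-- Classical propositional logic: modality-free tautologies. -/
def Cl : Set MF := {φ | φ.boxFree ∧ ∀ v : ℕ → Bool, evalb v φ = true}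

/-- Uniform substitution. -/
def subst (s : ℕ → MF) : MF → MF
  | .var n => s n
  | .bot => .bot
  | .imp a b => .imp (subst s a) (subst s b)
  | .box a => .box (subst s a)

def boxIter : ℕ → MF → MF
  | 0, a => a
  | n+1, a => .box (boxIter n a)

/-- The minimal normal modal logic K (semantically: validity in all Kripke frames). -/
def Ksem : Set MF := {φ | ∀ (W : Type) (R : W → W → Prop) (V : ℕ → W → Prop) (w : W), sat R V w φ}

def pv : MF := .var 0
def qv : MF := .var 1

def delta : ℕ → MF
  | 0 => qv.box
  | n+1 => qv.and ((qv.neg.and (delta n).dia).dia)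
def alpha (n : ℕ) : MF := (delta n).and (delta (n+1)).neg
def beta (n : ℕ) : MF := (pv.and (alpha n)).dia

def delta' : ℕ → MF
  | 0 => MF.bot.box
  | n+1 => (delta' n).dia
def alpha' (n : ℕ) : MF := (delta' n).and (delta' (n+1)).neg
def beta' (n : ℕ) : MF := (pv.and (alpha' n)).dia

def alpha'' (n : ℕ) : MF := ((MF.top.dia.boxPlus).dia).and ((delta' n).and (delta' (n+1)).neg)
def beta'' (n : ℕ) : MF := (alpha'' n).dia

def grzAx : MF := ((((pv.imp pv.box).box).imp pv).box).imp pv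
def lin3Ax : MF := (((pv.box).imp qv).box).or (((qv.box).imp pv).box)
def loebAx : MF := (((pv.box).imp pv).box).imp pv.box
def lin3'Ax : MF := (((pv.box).imp qv).box).or (((qv.boxPlus).imp pv).box)

/-- The frame ⟨ω ∪ {ω}, ≥⟩ : worlds are `ℕ∞`, `x R y` iff `x ≥ y`. -/
def Rge (x y : ℕ∞) : Prop := y ≤ x
/-- The frame ⟨ω ∪ {ω}, >⟩ : worlds are `ℕ∞`, `x R y` iff `x > y`. -/
def Rgt (x y : ℕ∞) : Prop := y < x

/-- Raw worlds of the frame F''. -/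
inductive CW : Type
  | root : CW
  | sink : CW
  | chain : ℕ → ℕ → CW

def CW.valid : CW → Prop
  | .chain k m => 1 ≤ k ∧ m ≤ k
  | _ => True

/-- Worlds of F'': `w`, `w*`, and `w^k_m` for `k ≥ 1`, `0 ≤ m ≤ k`. -/
def W'' : Type := {x : CW // x.valid}

/-- The accessibility relation of F'' (depending on the Boolean valuation `v`):
`w` sees `w*` and every `w^k_m` with `m ≥ 1`, but sees `w^k_0` only if `v k = true`;
`w^k_m R w^k_{m+1}`; `w^k_0 R w*`; `w*` has no successors. -/
def Rc (v : ℕ → Bool) : CW → CW → Prop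
  | .root, .sink => True
  | .root, .chain k m => 1 ≤ m ∨ v k = true
  | .chain k m, .chain k' m' => k' = k ∧ m' = m + 1
  | .chain _ m, .sink => m = 0
  | _, _ => False

def Rf (v : ℕ → Bool) (x y : W'') : Prop := Rc v x.val y.val

def wRoot : W'' := ⟨CW.root, trivial⟩
def wSink : W'' := ⟨CW.sink, trivial⟩
def wChain (k m : ℕ) (h : 1 ≤ k ∧ m ≤ k) : W'' := ⟨CW.chain k m, h⟩

/-- GL.3, semantically: the logic of transitive, converse well-founded strict linear orders. -/
def GL3sem : Set MF := {φ | ∀ (W : Type) (R : W → W → Prop),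
  Transitive R → (¬ ∃ f : ℕ → W, ∀ i, R (f i) (f (i + 1))) →
  (∀ x y, R x y ∨ x = y ∨ R y x) →
  ∀ (V : ℕ → W → Prop) (w : W), sat R V w φ}


/-! On the frame `⟨ℕ∞, >⟩`, a GL.3 frame, `δ'ₙ₊₁` holds exactly above `n`, so `α'ₙ` holds only at
`n` and `β'ₖ` holds at `⊤ = ω` iff `p` holds at `k`. Making `p` true at `k` iff `v k`, the world
`ω` evaluates `s'(φ)` as `v` evaluates `φ`; hence `s'(φ) ∈ L ⊆ GL.3` forces `φ` to be a
tautology. The converse is closure of `L` under substitution. -/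

section Connectives

variable {W : Type} (R : W → W → Prop) (V : ℕ → W → Prop) (w : W)

@[simp] lemma sat_neg (a : MF) : sat R V w a.neg ↔ ¬ sat R V w a := by
  simp [MF.neg, sat]

@[simp] lemma sat_and (a b : MF) : sat R V w (a.and b) ↔ sat R V w a ∧ sat R V w b := by
  simp only [MF.and, sat_neg, sat]
  tauto

@[simp] lemma sat_dia (a : MF) : sat R V w a.dia ↔ ∃ u, R w u ∧ sat R V u a := by
  simp [MF.dia, sat]

lemma sat_subst_iff_evalb {s : ℕ → MF} {v : ℕ → Bool} (hs : ∀ k, sat R V w (s k) ↔ v k = true)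
    {φ : MF} (hφ : φ.boxFree) : sat R V w (subst s φ) ↔ evalb v φ = true := by
  induction φ with
  | var n => exact hs n
  | bot => simp [subst, sat, evalb]
  | imp a b iha ihb =>
    simp only [subst, sat, evalb, iha hφ.1, ihb hφ.2, Bool.or_eq_true, Bool.not_eq_true']
    cases evalb v a <;> simp
  | box a => exact hφ.elim

end Connectives

lemma sat_gt_of_mem_GL3sem {α : Type} [LinearOrder α] [WellFoundedLT α] {φ : MF}
    (hφ : φ ∈ GL3sem) (V : ℕ → α → Prop) (x : α) : sat (fun x y => y < x) V x φ :=
  hφ α _ (fun _ _ _ hxy hyz => hyz.trans hxy)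
    (fun ⟨f, hf⟩ => (WellFounded.not_rel_apply_succ f).elim fun n hn => hn (hf n))
    (fun a b => (lt_trichotomy b a).imp_right (Or.imp_left Eq.symm)) V x

section Depth

variable (V : ℕ → ℕ∞ → Prop)

lemma sat_delta'_zero (x : ℕ∞) : sat Rgt V x (delta' 0) ↔ x = 0 := by
  simp only [delta', sat, Rgt, imp_false, not_lt]
  exact ⟨fun h => nonpos_iff_eq_zero.1 (h 0), fun h u => h ▸ zero_le⟩

lemma sat_delta'_succ (n : ℕ) (x : ℕ∞) : sat Rgt V x (delta' (n + 1)) ↔ (n : ℕ∞) < x := by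
  induction n generalizing x with
  | zero => simp [delta'.eq_2, sat_delta'_zero, Rgt, pos_iff_ne_zero]
  | succ n ih =>
    simp only [delta'.eq_2 (n + 1), sat_dia, ih, Rgt, Nat.cast_add_one]
    refine ⟨fun ⟨u, hux, hnu⟩ => ?_, fun h => ⟨n + 1, h, ENat.natCast_lt_succ⟩⟩
    exact (ENat.natCast_add_one_le_iff.2 hnu).trans_lt hux

lemma sat_alpha' (n : ℕ) (x : ℕ∞) : sat Rgt V x (alpha' n) ↔ x = n := by
  cases n with
  | zero => simp [alpha', sat_delta'_zero, sat_delta'_succ]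
  | succ n =>
    rw [alpha', sat_and, sat_neg, sat_delta'_succ, sat_delta'_succ, ← ENat.natCast_add_one_le_iff,
      not_lt, Nat.cast_add_one, and_comm, ← le_antisymm_iff]

lemma sat_beta' (k : ℕ) (x : ℕ∞) : sat Rgt V x (beta' k) ↔ (k : ℕ∞) < x ∧ V 0 k := by
  simp [beta', sat_alpha', pv, sat, Rgt]

end Depth

/-- for Cl ⊆ L ⊆ GL.3 closed under substitution, a modality-free φ is a
classical tautology iff its substitution instance (p_k ↦ β'_k, one-variable formulas)
belongs to L. -/
theorem taut_iff_subst_beta'_mem (L : Set MF)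
    (hsub : ∀ (φ : MF) (s : ℕ → MF), φ ∈ L → subst s φ ∈ L)
    (hCl : Cl ⊆ L) (hG : L ⊆ GL3sem) :
    ∀ φ : MF, φ.boxFree → (φ ∈ Cl ↔ subst (fun k => beta' k) φ ∈ L) := by
  intro φ hφ
  refine ⟨fun hφCl => hsub φ _ (hCl hφCl), fun hφL => ⟨hφ, fun v => ?_⟩⟩
  let V : ℕ → ℕ∞ → Prop := fun _ x => ∃ j : ℕ, x = j ∧ v j = true
  have hβ (k : ℕ) : sat Rgt V ⊤ (beta' k) ↔ v k = true := by simp [V, sat_beta']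
  exact (sat_subst_iff_evalb Rgt V ⊤ hβ hφ).1 (sat_gt_of_mem_GL3sem (hG hφL) V ⊤)
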